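/- If f is an N-expansive homeomorphism of a compact metric space whose nonwandering set Ω(f) is expansive (f restricted to Ω(f) has at most 1 point in each Γ_α ∩ Ω(f)), Ω(f) is isolated (Ω(f) = ∩_{n∈ℤ} f^n(U) for some open U), and there exist δ > 0 such that every set X disjoint from Ω(f) with diam(f^n(X)) < δ for all n ∈ ℤ has at most 2 points, then f is 2-expansive for a suitable constant. (Structure of the proof that the bitorus example is 2-expansive.) -/

import Mathlib

/-! If `Γ_ε(x)` meets `Ω(f)`, then every orbit in `Γ_ε(x)` stays `2ε`-close to an orbit of `Ω(f)`,
hence inside a neighbourhood of `Ω(f)` contained in `U`; since `Ω(f)` is the maximal invariant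
subset of `U`, all of `Γ_ε(x)` lies in `Ω(f)`, and expansivity of `Ω(f)` makes it a single point.
Otherwise `Γ_ε(x)` is disjoint from `Ω(f)` and all its iterates have diameter at most `2ε`,
so the hypothesis on sets disjoint from `Ω(f)` bounds its cardinality by two. -/

open Metric Set

noncomputable def iterZ {M : Type*} [TopologicalSpace M] (f : M ≃ₜ M) (n : ℤ) (x : M) : M := (f.toEquiv ^ n) x

def GammaSet {M : Type*} [MetricSpace M] (f : M ≃ₜ M) (ε : ℝ) (x : M) : Set M :=
  {y | ∀ n : ℤ, dist (iterZ f n x) (iterZ f n y) ≤ ε}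

def WsSet {M : Type*} [MetricSpace M] (f : M ≃ₜ M) (ε : ℝ) (x : M) : Set M :=
  {y | ∀ n : ℤ, 0 ≤ n → dist (iterZ f n x) (iterZ f n y) ≤ ε}

def WuSet {M : Type*} [MetricSpace M] (f : M ≃ₜ M) (ε : ℝ) (x : M) : Set M :=
  {y | ∀ n : ℤ, n ≤ 0 → dist (iterZ f n x) (iterZ f n y) ≤ ε}

def NonWandering {M : Type*} [TopologicalSpace M] (f : M ≃ₜ M) : Set M :=
  {x | ∀ V : Set M, IsOpen V → x ∈ V →
    ∃ n : ℕ, 1 ≤ n ∧ ((iterZ f (n : ℤ)) '' V ∩ V).Nonempty}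

section Iterates

variable {M : Type*} [TopologicalSpace M] (f : M ≃ₜ M)

lemma iterZ_zero (x : M) : iterZ f 0 x = x := by
  simp [iterZ]

lemma iterZ_iterZ (a b : ℤ) (x : M) :
    iterZ f a (iterZ f b x) = iterZ f (a + b) x := by
  simp only [iterZ, ← Equiv.Perm.mul_apply, ← zpow_add]

lemma mem_iInter_iterZ_image_iff (U : Set M) (y : M) :
    y ∈ ⋂ n : ℤ, iterZ f n '' U ↔ ∀ n : ℤ, iterZ f n y ∈ U := by
  simp only [mem_iInter]
  constructor
  · intro h n
    obtain ⟨u, hu, rfl⟩ := h (-n)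
    simpa [iterZ_iterZ, iterZ_zero] using hu
  · intro h n
    exact ⟨iterZ f (-n) y, h (-n), by simp [iterZ_iterZ, iterZ_zero]⟩

lemma iterZ_mem_iInter_iterZ_image (U : Set M) {p : M}
    (hp : p ∈ ⋂ n : ℤ, iterZ f n '' U) (m : ℤ) : iterZ f m p ∈ ⋂ n : ℤ, iterZ f n '' U := by
  rw [mem_iInter_iterZ_image_iff] at hp ⊢
  intro n
  simpa [iterZ_iterZ] using hp (n + m)

lemma isClosed_nonWandering : IsClosed (NonWandering f) := by
  rw [← isOpen_compl_iff, isOpen_iff_forall_mem_open]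
  intro x hx
  simp only [NonWandering, mem_compl_iff, mem_ofPred_eq, not_forall] at hx
  obtain ⟨V, hVopen, hxV, hV⟩ := hx
  exact ⟨V, fun y hy hyΩ => hV (hyΩ V hVopen hy), hVopen, hxV⟩

end Iterates

section GammaSet

variable {M : Type*} [MetricSpace M] (f : M ≃ₜ M) {ε : ℝ} {x : M}

lemma dist_iterZ_le_of_mem_gammaSet {y z : M} (hy : y ∈ GammaSet f ε x)
    (hz : z ∈ GammaSet f ε x) (n : ℤ) : dist (iterZ f n y) (iterZ f n z) ≤ 2 * ε :=
  calc dist (iterZ f n y) (iterZ f n z)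
      ≤ dist (iterZ f n x) (iterZ f n y) + dist (iterZ f n x) (iterZ f n z) :=
        dist_triangle_left _ _ _
    _ ≤ ε + ε := add_le_add (hy n) (hz n)
    _ = 2 * ε := by ring

lemma diam_iterZ_image_gammaSet_le (hε : 0 ≤ ε) (n : ℤ) :
    diam (iterZ f n '' GammaSet f ε x) ≤ 2 * ε := by
  apply diam_le_of_forall_dist_le (by positivity)
  rintro _ ⟨y, hy, rfl⟩ _ ⟨z, hz, rfl⟩
  exact dist_iterZ_le_of_mem_gammaSet f hy hz n

lemma gammaSet_subset_iInter_iterZ_image {U : Set M} {r : ℝ}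
    (hr : thickening r (⋂ n : ℤ, iterZ f n '' U) ⊆ U) (hεr : 2 * ε < r)
    (hmeet : (GammaSet f ε x ∩ ⋂ n : ℤ, iterZ f n '' U).Nonempty) :
    GammaSet f ε x ⊆ ⋂ n : ℤ, iterZ f n '' U := by
  obtain ⟨p, hpΓ, hpS⟩ := hmeet
  intro y hy
  rw [mem_iInter_iterZ_image_iff]
  intro n
  apply hr
  rw [mem_thickening_iff]
  exact ⟨iterZ f n p, iterZ_mem_iInter_iterZ_image f U hpS n,
    (dist_iterZ_le_of_mem_gammaSet f hy hpΓ n).trans_lt hεr⟩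

lemma gammaSet_subsingleton_of_subset {S : Set M} {α : ℝ}
    (hexp : ∀ y z : M, y ∈ S → z ∈ S → (∀ n : ℤ, dist (iterZ f n y) (iterZ f n z) ≤ α) → y = z)
    (hεα : 2 * ε ≤ α) (hS : GammaSet f ε x ⊆ S) : (GammaSet f ε x).Subsingleton :=
  fun y hy z hz => hexp y z (hS hy) (hS hz)
    fun n => (dist_iterZ_le_of_mem_gammaSet f hy hz n).trans hεα

end GammaSet

theorem stmt14 {M : Type*} [MetricSpace M] [CompactSpace M] (f : M ≃ₜ M)
    (α₁ : ℝ) (hα₁ : 0 < α₁)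
    (ha : ∀ x y : M, x ∈ NonWandering f → y ∈ NonWandering f →
      (∀ n : ℤ, dist (iterZ f n x) (iterZ f n y) ≤ α₁) → x = y)
    (U : Set M) (hUopen : IsOpen U) (hUΩ : NonWandering f ⊆ U)
    (hb : NonWandering f = ⋂ n : ℤ, iterZ f n '' U)
    (δ : ℝ) (hδ : 0 < δ)
    (hc : ∀ X : Set M, Disjoint X (NonWandering f) →
      (∀ n : ℤ, Metric.diam (iterZ f n '' X) ≤ δ) → X.encard ≤ 2) :
    ∃ ε > (0:ℝ), ∀ x : M, (GammaSet f ε x).encard ≤ 2 := by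
  obtain ⟨r, hr, hthick⟩ :=
    (isClosed_nonWandering f).isCompact.exists_thickening_subset_open hUopen hUΩ
  rw [hb] at hthick
  set ε := min (α₁ / 2) (min (δ / 2) (r / 3))
  have hεα : ε ≤ α₁ / 2 := min_le_left _ _
  have hεδ : ε ≤ δ / 2 := (min_le_right _ _).trans (min_le_left _ _)
  have hεr : ε ≤ r / 3 := (min_le_right _ _).trans (min_le_right _ _)
  have hε : 0 < ε := by positivity
  refine ⟨ε, hε, fun x => ?_⟩
  by_cases hmeet : (GammaSet f ε x ∩ NonWandering f).Nonempty
  · rw [hb] at hmeet ha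
    have hsub := gammaSet_subset_iInter_iterZ_image f hthick (by linarith) hmeet
    calc (GammaSet f ε x).encard ≤ 1 :=
          encard_le_one_iff_subsingleton.mpr
            (gammaSet_subsingleton_of_subset f ha (by linarith) hsub)
      _ ≤ 2 := by norm_num
  · exact hc _ (disjoint_iff_inter_eq_empty.mpr (not_nonempty_iff_eq_empty.mp hmeet))
      fun n => (diam_iterZ_image_gammaSet_le f hε.le n).trans (by linarith)
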